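/- arXiv:1912.11104 — 2 statements merged into one kernel-verified Lean document; each statement's English description precedes it below -/
import Mathlib

section
/- The number of faces of a melonic graph of the rank-3 tetrahedral tensor model with b bubbles equals (3/2)b + 3. Equivalently, since b is even for melonic graphs, F = 3(b/2) + 3. -/
/-!  A combinatorial model of the Feynman graphs of the rank-3 tetrahedral
(`O(N)^3`) tensor model.

A graph consists of a finite set `B` of bubbles (copies of the tetrahedron
`K_4`); each bubble has four vertices, so the vertex set is `B × Fin 4`.
Inside every bubble the edges of colors `1,2,3` are given once and for all by
the three fixed-point-free involutions of `Fin 4` (the proper 3-edge-coloring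
of `K_4`).  The color-0 propagator edges, one per vertex, are encoded by a
fixed-point-free involution `pairing` of the vertex set. -/

open Equiv

/-- The color-`c` (for `c ∈ {1,2,3}`, here `c : Fin 3`) perfect matching on the
four vertices of a tetrahedral bubble. -/
def bubblePerm : Fin 3 → Equiv.Perm (Fin 4) :=
  ![Equiv.swap 0 1 * Equiv.swap 2 3,
    Equiv.swap 0 2 * Equiv.swap 1 3,
    Equiv.swap 0 3 * Equiv.swap 1 2]

/-- A Feynman graph of the tetrahedral tensor model: a finite set of `K_4`
bubbles together with a fixed-point-free involution of the vertex set
describing the color-0 edges. -/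
structure TGraph where
  B : Type
  [fintypeB : Fintype B]
  [decB : DecidableEq B]
  pairing : Equiv.Perm (B × Fin 4)
  invol : ∀ v, pairing (pairing v) = v
  fixfree : ∀ v, pairing v ≠ v

attribute [instance] TGraph.fintypeB TGraph.decB

namespace TGraph

/-- The vertex set of a graph. -/
abbrev V (G : TGraph) : Type := G.B × Fin 4

/-- The permutation of the vertices given by the color-`c` edges inside the
bubbles. -/
def colPerm (G : TGraph) (c : Fin 3) : Equiv.Perm G.V :=
  (Equiv.refl G.B).prodCongr (bubblePerm c)

/-- The number of bubbles of a graph. -/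
def b (G : TGraph) : ℕ := Fintype.card G.B

/-- The subgroup of permutations of the vertices generated by the color-0
pairing and the color-`c` matching: its orbits are exactly the faces of
color `c` (cycles alternating colors `0` and `c`). -/
def faceGroup (G : TGraph) (c : Fin 3) : Subgroup (Equiv.Perm G.V) :=
  Subgroup.closure {G.pairing, G.colPerm c}

/-- Two vertices lie on the same face of color `c`. -/
def sameFace (G : TGraph) (c : Fin 3) (u v : G.V) : Prop :=
  u ∈ MulAction.orbit (G.faceGroup c) v

/-- The number of faces of color `c` of the graph. -/
noncomputable def numFaces (G : TGraph) (c : Fin 3) : ℕ :=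
  Nat.card (MulAction.orbitRel.Quotient (G.faceGroup c) G.V)

/-- The total number of faces of the graph. -/
noncomputable def F (G : TGraph) : ℕ := ∑ c : Fin 3, G.numFaces c

/-- The length of the face of color `c` through the vertex `v` (a face of
length `n` consists of `n` color-0 edges and `n` color-`c` edges, hence `2n`
vertices). -/
noncomputable def faceLength (G : TGraph) (c : Fin 3) (v : G.V) : ℕ :=
  Nat.card (MulAction.orbit (G.faceGroup c) v) / 2

/-- The subgroup generated by all edges of the graph. -/
def fullGroup (G : TGraph) : Subgroup (Equiv.Perm G.V) :=
  Subgroup.closure ({G.pairing} ∪ Set.range G.colPerm)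

/-- A graph is connected if any vertex can be reached from any other one along
its edges. -/
def Connected (G : TGraph) : Prop :=
  ∀ u v : G.V, u ∈ MulAction.orbit G.fullGroup v

/-- One step along an edge of the graph avoiding the color-0 edges whose
endpoints belong to `S`. -/
def stepAvoiding (G : TGraph) (S : Set G.V) (u v : G.V) : Prop :=
  (∃ c, v = G.colPerm c u) ∨ (v = G.pairing u ∧ u ∉ S ∧ v ∉ S)

/-- Reachability in the graph with the color-0 edges meeting `S` removed. -/
def reachAvoiding (G : TGraph) (S : Set G.V) : G.V → G.V → Prop :=
  Relation.ReflTransGen (G.stepAvoiding S)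

/-- The pair of color-0 edges through the vertices `u` and `w` disconnects the
graph when removed.  Together with the requirement that the two edges be
distinct, this is the notion of a 2-edge-cut of color-0 edges. -/
def CutDisconnects (G : TGraph) (u w : G.V) : Prop :=
  ¬ ∀ x y : G.V, G.reachAvoiding {u, G.pairing u, w, G.pairing w} x y

/-- Two vertices are connected by a 2-point function if they are joined by a
color-0 edge, or if their two (distinct) color-0 edges form a 2-edge-cut. -/
def TwoPoint (G : TGraph) (x y : G.V) : Prop :=
  G.pairing x = y ∨ (y ≠ x ∧ y ≠ G.pairing x ∧ G.CutDisconnects x y)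

/-- The flip of the two color-0 edges `{u, pairing u}` and `{w, pairing w}`
(assumed distinct) which reconnects `u` with `w` (and `pairing u` with
`pairing w`): the pairing is conjugated by the transposition exchanging
`pairing u` and `w`.  The other flip of this pair of edges is
`G.flip u (G.pairing w)`. -/
def flip (G : TGraph) (u w : G.V) : TGraph where
  B := G.B
  pairing := Equiv.swap (G.pairing u) w * G.pairing * Equiv.swap (G.pairing u) w
  invol := by
    intro v
    simp only [Equiv.Perm.mul_apply, Equiv.swap_apply_self, G.invol]
  fixfree := by
    intro v h
    simp only [Equiv.Perm.mul_apply] at h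
    have h' : G.pairing (Equiv.swap (G.pairing u) w v) = Equiv.swap (G.pairing u) w v := by
      have := congrArg (Equiv.swap (G.pairing u) w) h
      simpa using this
    exact G.fixfree _ h'

/-- The face of color `c` through the color-0 edge `{v, pairing v}` has
length 2 (it consists of this edge, a color-`c` edge, a second color-0 edge
and a second color-`c` edge closing the cycle). -/
def FaceLen2 (G : TGraph) (c : Fin 3) (v : G.V) : Prop :=
  G.pairing v ≠ G.colPerm c v ∧
    G.pairing (G.colPerm c (G.pairing v)) = G.colPerm c v

/-- A proper face of length 2 of color `c` through `v`: a face of length 2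
whose two color-0 edges connect two distinct bubbles. -/
def ProperFace2 (G : TGraph) (c : Fin 3) (v : G.V) : Prop :=
  G.FaceLen2 c v ∧ (G.pairing v).1 ≠ v.1

/-- A graph maximizes the number of faces if it is connected and no connected
graph with the same number of bubbles has more faces. -/
def MaximizesFaces (G : TGraph) : Prop :=
  G.Connected ∧ ∀ H : TGraph, H.Connected → H.b = G.b → H.F ≤ G.F

/-- Isomorphisms of graphs: bijections of the vertex sets commuting with the
color-0 pairing and with the colored matchings inside the bubbles. -/
structure Iso (G H : TGraph) where
  toEquiv : G.V ≃ H.V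
  map_pairing : ∀ v, toEquiv (G.pairing v) = H.pairing (toEquiv v)
  map_col : ∀ c v, toEquiv (G.colPerm c v) = H.colPerm c (toEquiv v)

/-- Two graphs are isomorphic. -/
def IsIso (G H : TGraph) : Prop := Nonempty (Iso G H)

end TGraph

open TGraph

/-- The leading-order two-bubble graph `G_2`: two tetrahedral bubbles with
corresponding vertices joined by four color-0 edges, so that all six faces
have length 2. -/
def G2 : TGraph where
  B := Fin 2
  pairing := (Equiv.swap (0 : Fin 2) 1).prodCongr (Equiv.refl (Fin 4))
  invol := by
    rintro ⟨i, k⟩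
    simp [Equiv.prodCongr_apply, Equiv.swap_apply_self]
  fixfree := by
    rintro ⟨i, k⟩ h
    have hi : Equiv.swap (0 : Fin 2) 1 i = i := congrArg Prod.fst h
    fin_cases i <;> simp_all

/-- The double tadpole `G_1^{(c)}`: one tetrahedral bubble whose two color-0
edges each join two vertices already adjacent by an edge of color `c`. -/
def G1 (c : Fin 3) : TGraph where
  B := Fin 1
  pairing := (Equiv.refl (Fin 1)).prodCongr (bubblePerm c)
  invol := by
    rintro ⟨i, k⟩
    have hk : ∀ j : Fin 4, bubblePerm c (bubblePerm c j) = j := by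
      fin_cases c <;> decide
    simp [Equiv.prodCongr_apply, hk]
  fixfree := by
    rintro ⟨i, k⟩ h
    have hk : bubblePerm c k = k := congrArg Prod.snd h
    have hne : ∀ j : Fin 4, bubblePerm c j ≠ j := by
      fin_cases c <;> decide
    exact hne k hk

namespace TGraph

variable (H K : TGraph)

/-- The image of a vertex of `H` in the glued graph. -/
def inlV (x : H.V) : (H.B ⊕ K.B) × Fin 4 := (Sum.inl x.1, x.2)

/-- The image of a vertex of `K` in the glued graph. -/
def inrV (y : K.V) : (H.B ⊕ K.B) × Fin 4 := (Sum.inr y.1, y.2)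

/-- The underlying function of the pairing of the graph obtained by gluing `H`
and `K` along the color-0 edges `{p, H.pairing p}` and `{q, K.pairing q}`:
these two edges are cut and the half-edges are reglued as `p — q` and
`H.pairing p — K.pairing q`.  The new pair of edges is a 2-edge-cut of the
resulting graph when `H` and `K` are connected. -/
def glueFun (p : H.V) (q : K.V) : (H.B ⊕ K.B) × Fin 4 → (H.B ⊕ K.B) × Fin 4 :=
  fun z =>
    match z with
    | (Sum.inl u, k) =>
        if (u, k) = p then inrV H K q
        else if (u, k) = H.pairing p then inrV H K (K.pairing q)
        else inlV H K (H.pairing (u, k))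
    | (Sum.inr u, k) =>
        if (u, k) = q then inlV H K p
        else if (u, k) = K.pairing q then inlV H K (H.pairing p)
        else inrV H K (K.pairing (u, k))

theorem glueFun_inlV (p : H.V) (q : K.V) (x : H.V) :
    glueFun H K p q (inlV H K x) =
      if x = p then inrV H K q
      else if x = H.pairing p then inrV H K (K.pairing q)
      else inlV H K (H.pairing x) := by
  cases x
  rfl

theorem glueFun_inrV (p : H.V) (q : K.V) (y : K.V) :
    glueFun H K p q (inrV H K y) =
      if y = q then inlV H K p
      else if y = K.pairing q then inlV H K (H.pairing p)
      else inrV H K (K.pairing y) := by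
  cases y
  rfl

theorem inlV_injective : Function.Injective (inlV H K) := by
  rintro ⟨u, k⟩ ⟨u', k'⟩ h
  have h1 : (Sum.inl u : H.B ⊕ K.B) = Sum.inl u' := congrArg Prod.fst h
  have h2 : k = k' := congrArg Prod.snd h
  exact Prod.ext (Sum.inl_injective h1) h2

theorem inrV_injective : Function.Injective (inrV H K) := by
  rintro ⟨u, k⟩ ⟨u', k'⟩ h
  have h1 : (Sum.inr u : H.B ⊕ K.B) = Sum.inr u' := congrArg Prod.fst h
  have h2 : k = k' := congrArg Prod.snd h
  exact Prod.ext (Sum.inr_injective h1) h2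

theorem inlV_ne_inrV (x : H.V) (y : K.V) : inlV H K x ≠ inrV H K y := by
  intro h
  exact Sum.inl_ne_inr (congrArg Prod.fst h)

theorem glueFun_invol_inl (p : H.V) (q : K.V) (x : H.V) :
    glueFun H K p q (glueFun H K p q (inlV H K x)) = inlV H K x := by
  rw [glueFun_inlV]
  by_cases h1 : x = p
  · rw [if_pos h1, glueFun_inrV, if_pos rfl, h1]
  · by_cases h2 : x = H.pairing p
    · rw [if_neg h1, if_pos h2, glueFun_inrV,
        if_neg (fun h => K.fixfree q h), if_pos rfl, h2]
    · have hne1 : H.pairing x ≠ p := by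
        intro h; apply h2
        have := congrArg H.pairing h
        rw [H.invol] at this; exact this
      have hne2 : H.pairing x ≠ H.pairing p := fun h => h1 (H.pairing.injective h)
      rw [if_neg h1, if_neg h2, glueFun_inlV, if_neg hne1, if_neg hne2, H.invol]

theorem glueFun_invol_inr (p : H.V) (q : K.V) (y : K.V) :
    glueFun H K p q (glueFun H K p q (inrV H K y)) = inrV H K y := by
  rw [glueFun_inrV]
  by_cases h1 : y = q
  · rw [if_pos h1, glueFun_inlV, if_pos rfl, h1]
  · by_cases h2 : y = K.pairing q
    · rw [if_neg h1, if_pos h2, glueFun_inlV,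
        if_neg (fun h => H.fixfree p h), if_pos rfl, h2]
    · have hne1 : K.pairing y ≠ q := by
        intro h; apply h2
        have := congrArg K.pairing h
        rw [K.invol] at this; exact this
      have hne2 : K.pairing y ≠ K.pairing q := fun h => h1 (K.pairing.injective h)
      rw [if_neg h1, if_neg h2, glueFun_inrV, if_neg hne1, if_neg hne2, K.invol]

theorem glueFun_involutive (p : H.V) (q : K.V) :
    Function.Involutive (glueFun H K p q) := by
  rintro ⟨(u | u), k⟩
  · exact glueFun_invol_inl H K p q (u, k)
  · exact glueFun_invol_inr H K p q (u, k)

theorem glueFun_fixfree (p : H.V) (q : K.V) :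
    ∀ z, glueFun H K p q z ≠ z := by
  have hl : ∀ x : H.V, glueFun H K p q (inlV H K x) ≠ inlV H K x := by
    intro x h
    rw [glueFun_inlV] at h
    by_cases h1 : x = p
    · rw [if_pos h1] at h
      exact inlV_ne_inrV H K x q h.symm
    · by_cases h2 : x = H.pairing p
      · rw [if_neg h1, if_pos h2] at h
        exact inlV_ne_inrV H K x (K.pairing q) h.symm
      · rw [if_neg h1, if_neg h2] at h
        exact H.fixfree x (inlV_injective H K h)
  have hr : ∀ y : K.V, glueFun H K p q (inrV H K y) ≠ inrV H K y := by
    intro y h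
    rw [glueFun_inrV] at h
    by_cases h1 : y = q
    · rw [if_pos h1] at h
      exact inlV_ne_inrV H K p y h
    · by_cases h2 : y = K.pairing q
      · rw [if_neg h1, if_pos h2] at h
        exact inlV_ne_inrV H K (H.pairing p) y h
      · rw [if_neg h1, if_neg h2] at h
        exact K.fixfree y (inrV_injective H K h)
  rintro ⟨(u | u), k⟩
  · exact hl (u, k)
  · exact hr (u, k)

/-- Gluing two graphs along a pair of color-0 edges.  When `H` and `K` are
connected, the two new color-0 edges form a 2-edge-cut of the glued graph, and
conversely every connected graph with a color-0 2-edge-cut arises this way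
from the two closed graphs obtained by cutting the two edges and closing each
side. -/
def glue (p : H.V) (q : K.V) : TGraph where
  B := H.B ⊕ K.B
  pairing := (glueFun_involutive H K p q).toPerm
  invol := fun v => glueFun_involutive H K p q v
  fixfree := fun v => glueFun_fixfree H K p q v

/-- Insertion of a melonic dipole (the 2-point graph obtained by cutting one
color-0 edge of `G_2`) on the color-0 edge `{v, G.pairing v}` of `G`. -/
def insertDipole (G : TGraph) (v : G.V) : TGraph :=
  glue G G2 v ((0 : Fin 2), (0 : Fin 4))

end TGraph

open TGraph

/-- Melonic graphs (up to isomorphism): `G_2` is melonic, and inserting a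
melonic dipole on any color-0 edge of a melonic graph yields a melonic
graph. -/
inductive IsMelonic : TGraph → Prop
  | base {G : TGraph} (h : IsIso G G2) : IsMelonic G
  | insert {G : TGraph} (hG : IsMelonic G) (v : G.V) {H : TGraph}
      (h : IsIso H (G.insertDipole v)) : IsMelonic H

/-- Double tadpoles decorated with melonic 2-point functions (up to
isomorphism): these are exactly the graphs obtained from one of the double
tadpoles `G_1^{(c)}` by repeatedly inserting melonic dipoles on color-0 edges,
i.e. double tadpoles whose two color-0 edges are replaced by melonic 2-point
functions. -/
inductive IsDecoratedTadpole : TGraph → Prop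
  | base {G : TGraph} (c : Fin 3) (h : IsIso G (G1 c)) : IsDecoratedTadpole G
  | insert {G : TGraph} (hG : IsDecoratedTadpole G) (v : G.V) {H : TGraph}
      (h : IsIso H (G.insertDipole v)) : IsDecoratedTadpole H

/-! Faces of color `c` are the orbits of `⟨pairing, colPerm c⟩`, so they are counted by any map
that is constant along both generators and has connected fibres. In `G_2` the faces of color `c`
correspond to the two color-`c` edges of a bubble. Inserting a dipole on the edge `{v, pairing v}`
reroutes the face of `G` through `v` along the color-`c` edges through vertex `0` of the two new
bubbles and creates exactly one new face, made of their other color-`c` edges. Hence an insertion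
adds two bubbles and three faces (one per color), and by induction `b = 2n`, `F = 3n + 3`. -/

open MulAction

namespace Equiv.Perm

variable {α β : Type*} {S : Set (Perm α)}

theorem apply_mem_orbit_closure {g : Perm α} (hg : g ∈ S) (x : α) :
    g x ∈ orbit (Subgroup.closure S) x :=
  ⟨⟨g, Subgroup.subset_closure hg⟩, rfl⟩

theorem map_mem_orbit_closure {T : Set (Perm β)} {f : α → β}
    (hf : ∀ g ∈ S, ∀ x, f (g x) ∈ orbit (Subgroup.closure T) (f x)) {x y : α}
    (h : x ∈ orbit (Subgroup.closure S) y) : f x ∈ orbit (Subgroup.closure T) (f y) := by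
  suffices key :
      ∀ g ∈ Subgroup.closure S, ∀ y, f (g y) ∈ orbit (Subgroup.closure T) (f y) by
    obtain ⟨⟨g, hg⟩, rfl⟩ := h
    exact key g hg y
  intro g hg
  induction hg using Subgroup.closure_induction with
  | mem g hg => exact hf g hg
  | one => exact fun y => mem_orbit_self (f y)
  | mul a b _ _ iha ihb => exact fun y => (orbit_eq_iff.mpr (ihb y)) ▸ iha (b y)
  | inv a _ iha => exact fun y => by simpa using mem_orbit_symm.mp (iha (a⁻¹ y))

theorem apply_eq_of_mem_orbit_closure {f : α → β} (hf : ∀ g ∈ S, ∀ x, f (g x) = f x)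
    {x y : α} (h : x ∈ orbit (Subgroup.closure S) y) : f x = f y := by
  suffices key : ∀ g ∈ Subgroup.closure S, ∀ y, f (g y) = f y by
    obtain ⟨⟨g, hg⟩, rfl⟩ := h
    exact key g hg y
  intro g hg
  induction hg using Subgroup.closure_induction with
  | mem g hg => exact hf g hg
  | one => exact fun _ => rfl
  | mul a b _ _ iha ihb => exact fun y => (iha (b y)).trans (ihb y)
  | inv a _ iha => exact fun y => by simpa using (iha (a⁻¹ y)).symm

theorem card_orbitRel_quotient_closure (f : α → β) (hf : ∀ g ∈ S, ∀ x, f (g x) = f x)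
    (sec : β → α) (hsec : ∀ b, f (sec b) = b)
    (hfib : ∀ x, sec (f x) ∈ orbit (Subgroup.closure S) x) :
    Nat.card (orbitRel.Quotient (Subgroup.closure S) α) = Nat.card β := by
  refine Nat.card_congr (Equiv.ofBijective
    (Quotient.lift f fun x y h => apply_eq_of_mem_orbit_closure hf h) ⟨?_, ?_⟩)
  · rintro ⟨x⟩ ⟨y⟩ (hxy : f x = f y)
    have hx := orbit_eq_iff.mpr (hfib x)
    have hy := orbit_eq_iff.mpr (hfib y)
    rw [hxy] at hx
    exact Quotient.sound (orbit_eq_iff.mp (hx.symm.trans hy))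
  · exact fun b => ⟨Quotient.mk _ (sec b), hsec b⟩

end Equiv.Perm

namespace TGraph

variable {G H : TGraph} {c : Fin 3}

abbrev Faces (G : TGraph) (c : Fin 3) : Type := orbitRel.Quotient (G.faceGroup c) G.V

def face (G : TGraph) (c : Fin 3) (x : G.V) : G.Faces c := Quotient.mk _ x

theorem sameFace_refl (x : G.V) : G.sameFace c x x := mem_orbit_self x

theorem sameFace.symm {x y : G.V} (h : G.sameFace c x y) : G.sameFace c y x :=
  mem_orbit_symm.mp h

theorem sameFace.trans {x y z : G.V} (hxy : G.sameFace c x y) (hyz : G.sameFace c y z) :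
    G.sameFace c x z := by
  unfold sameFace at *
  rwa [← orbit_eq_iff.mpr hyz]

theorem sameFace_pairing (x : G.V) : G.sameFace c (G.pairing x) x :=
  Perm.apply_mem_orbit_closure (Set.mem_insert _ _) x

theorem sameFace_colPerm (x : G.V) : G.sameFace c (G.colPerm c x) x :=
  Perm.apply_mem_orbit_closure (Set.mem_insert_of_mem _ (Set.mem_singleton _)) x

theorem face_eq_face_iff {x y : G.V} : G.face c x = G.face c y ↔ G.sameFace c x y :=
  Quotient.eq.trans orbitRel_apply

theorem face_pairing (x : G.V) : G.face c (G.pairing x) = G.face c x :=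
  face_eq_face_iff.mpr (sameFace_pairing x)

theorem sameFace_out_face (x : G.V) : G.sameFace c (G.face c x).out x :=
  face_eq_face_iff.mp (Quotient.out_eq _)

theorem sameFace.map {f : G.V → H.V} (hp : ∀ x, H.sameFace c (f (G.pairing x)) (f x))
    (hc : ∀ x, H.sameFace c (f (G.colPerm c x)) (f x)) {x y : G.V} (h : G.sameFace c x y) :
    H.sameFace c (f x) (f y) :=
  Perm.map_mem_orbit_closure (by rintro g (rfl | rfl) x; exacts [hp x, hc x]) h

theorem numFaces_eq_card {β : Type*} (f : G.V → β) (hp : ∀ x, f (G.pairing x) = f x)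
    (hc : ∀ x, f (G.colPerm c x) = f x) (sec : β → G.V) (hsec : ∀ b, f (sec b) = b)
    (hfib : ∀ x, G.sameFace c (sec (f x)) x) : G.numFaces c = Nat.card β :=
  Perm.card_orbitRel_quotient_closure f (by rintro g (rfl | rfl) x; exacts [hp x, hc x])
    sec hsec hfib

namespace Iso

def symm (e : Iso G H) : Iso H G where
  toEquiv := e.toEquiv.symm
  map_pairing v := e.toEquiv.injective (by simp [e.map_pairing])
  map_col c v := e.toEquiv.injective (by simp [e.map_col])

theorem sameFace_map (e : Iso G H) {x y : G.V} (h : G.sameFace c x y) :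
    H.sameFace c (e.toEquiv x) (e.toEquiv y) :=
  h.map (fun x => by rw [e.map_pairing]; exact sameFace_pairing _)
    (fun x => by rw [e.map_col]; exact sameFace_colPerm _)

theorem numFaces_eq (e : Iso G H) (c : Fin 3) : G.numFaces c = H.numFaces c :=
  Nat.card_congr <| Quotient.congr e.toEquiv fun x y => by
    simp only [orbitRel_apply]
    refine ⟨e.sameFace_map, fun h => ?_⟩
    have h' := e.symm.sameFace_map h
    simp only [symm, Equiv.symm_apply_apply] at h'
    exact h'

theorem F_eq (e : Iso G H) : G.F = H.F :=
  Finset.sum_congr rfl fun c _ => e.numFaces_eq c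

theorem b_eq (e : Iso G H) : G.b = H.b := by
  have h := Fintype.card_congr e.toEquiv
  simp only [V, Fintype.card_prod, Fintype.card_fin] at h
  exact Nat.eq_of_mul_eq_mul_right (by norm_num) h

end Iso

end TGraph

def onEdgeOfZero (c : Fin 3) (k : Fin 4) : Bool := decide (k = 0 ∨ k = bubblePerm c 0)

/-- `![2, 1, 1] c` is a vertex off the color-`c` edge through `0`. -/
def edgeRep (c : Fin 3) (b : Bool) : Fin 4 := if b then 0 else ![2, 1, 1] c

theorem bubblePerm_zero_ne_zero : ∀ c, bubblePerm c 0 ≠ 0 := by decide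

theorem onEdgeOfZero_zero : ∀ c, onEdgeOfZero c 0 = true := by decide

theorem onEdgeOfZero_bubblePerm :
    ∀ c k, onEdgeOfZero c (bubblePerm c k) = onEdgeOfZero c k := by decide

theorem onEdgeOfZero_edgeRep : ∀ c b, onEdgeOfZero c (edgeRep c b) = b := by decide

theorem eq_edgeRep_or_eq_bubblePerm_edgeRep (c : Fin 3) (k : Fin 4) :
    k = edgeRep c (onEdgeOfZero c k) ∨ k = bubblePerm c (edgeRep c (onEdgeOfZero c k)) := by
  revert c k; decide

namespace TGraph

variable {c : Fin 3}

/-- `f` places two copies of a bubble in `H`. -/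
theorem sameFace_edgeRep {H : TGraph} (f : Fin 2 × Fin 4 → H.V)
    (hswap : ∀ i j k, H.sameFace c (f (i, k)) (f (j, k)))
    (hcol : ∀ i k, H.sameFace c (f (i, bubblePerm c k)) (f (i, k))) (i : Fin 2) (k : Fin 4) :
    H.sameFace c (f (0, edgeRep c (onEdgeOfZero c k))) (f (i, k)) := by
  suffices h : ∀ r, k = r ∨ k = bubblePerm c r → H.sameFace c (f (0, r)) (f (i, k)) from
    h _ (eq_edgeRep_or_eq_bubblePerm_edgeRep c k)
  rintro r (rfl | rfl)
  · exact hswap 0 i k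
  · exact (hcol 0 r).symm.trans (hswap 0 i _)

theorem G2_pairing_of_ne {i j : Fin 2} (hij : i ≠ j) (k : Fin 4) :
    G2.pairing (i, k) = (j, k) := by
  refine Prod.ext ?_ rfl
  show Equiv.swap (0 : Fin 2) 1 i = j
  revert i j; decide

theorem G2_sameFace_of_snd_eq (i j : Fin 2) (k : Fin 4) : G2.sameFace c (i, k) (j, k) := by
  rcases eq_or_ne i j with rfl | hij
  · exact sameFace_refl _
  · exact G2_pairing_of_ne hij k ▸ (sameFace_pairing _).symm

theorem numFaces_G2 (c : Fin 3) : G2.numFaces c = 2 := by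
  rw [numFaces_eq_card (fun x : G2.V => onEdgeOfZero c x.2) (fun _ => rfl)
    (fun x => onEdgeOfZero_bubblePerm c x.2) (fun b => ((0 : Fin 2), edgeRep c b))
    (onEdgeOfZero_edgeRep c)
    (fun x => sameFace_edgeRep (H := G2) id G2_sameFace_of_snd_eq
      (fun _ _ => sameFace_colPerm _) x.1 x.2)]
  simp

theorem F_G2 : G2.F = 6 := by
  simp [F, numFaces_G2]

end TGraph

namespace TGraph

variable (G : TGraph) (v : G.V) {c : Fin 3}

theorem b_insertDipole : (G.insertDipole v).b = G.b + 2 :=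
  Fintype.card_sum

def oldVertex (x : G.V) : (G.insertDipole v).V := inlV G G2 x

def dipoleVertex (y : G2.V) : (G.insertDipole v).V := inrV G G2 y

@[elab_as_elim]
theorem insertDipole_induction {P : (G.insertDipole v).V → Prop}
    (old : ∀ x, P (G.oldVertex v x)) (dipole : ∀ (i : Fin 2) k, P (G.dipoleVertex v (i, k)))
    (z : (G.insertDipole v).V) : P z := by
  obtain ⟨u | i, k⟩ := z
  exacts [old (u, k), dipole i k]

theorem insertDipole_pairing_oldVertex_self :
    (G.insertDipole v).pairing (G.oldVertex v v) = G.dipoleVertex v ((0 : Fin 2), 0) := by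
  show glueFun G G2 v _ (inlV G G2 v) = _
  rw [glueFun_inlV, if_pos rfl]
  rfl

theorem insertDipole_pairing_oldVertex_pairing :
    (G.insertDipole v).pairing (G.oldVertex v (G.pairing v)) =
      G.dipoleVertex v ((1 : Fin 2), 0) := by
  show glueFun G G2 v _ (inlV G G2 (G.pairing v)) = _
  rw [glueFun_inlV, if_neg (G.fixfree v), if_pos rfl]
  rfl

theorem insertDipole_pairing_oldVertex {x : G.V} (hv : x ≠ v) (hpv : x ≠ G.pairing v) :
    (G.insertDipole v).pairing (G.oldVertex v x) = G.oldVertex v (G.pairing x) := by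
  show glueFun G G2 v _ (inlV G G2 x) = _
  rw [glueFun_inlV, if_neg hv, if_neg hpv]
  rfl

theorem insertDipole_pairing_dipoleVertex {y : G2.V} (hy : y.2 ≠ 0) :
    (G.insertDipole v).pairing (G.dipoleVertex v y) = G.dipoleVertex v (G2.pairing y) := by
  show glueFun G G2 v _ (inrV G G2 y) = _
  rw [glueFun_inrV, if_neg (fun h => hy (congrArg Prod.snd h)),
    if_neg (fun h => hy (congrArg Prod.snd h))]
  rfl

theorem insertDipole_pairing_dipoleVertex_zero (i : Fin 2) :
    (G.insertDipole v).pairing (G.dipoleVertex v (i, 0)) =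
      G.oldVertex v (if i = 0 then v else G.pairing v) := by
  rw [← (G.insertDipole v).invol (G.oldVertex v (if i = 0 then v else G.pairing v))]
  congr 1
  split_ifs with hi
  · rw [insertDipole_pairing_oldVertex_self, hi]
  · rw [insertDipole_pairing_oldVertex_pairing, (by omega : i = 1)]

theorem insertDipole_sameFace_dipoleVertex_of_snd_eq (i j : Fin 2) (k : Fin 4) :
    (G.insertDipole v).sameFace c (G.dipoleVertex v (i, k)) (G.dipoleVertex v (j, k)) := by
  have hne : ∀ k ≠ 0, ∀ i j,
      (G.insertDipole v).sameFace c (G.dipoleVertex v (i, k)) (G.dipoleVertex v (j, k)) := by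
    intro k hk i j
    rcases eq_or_ne i j with rfl | hij
    · exact sameFace_refl _
    · have hp := G.insertDipole_pairing_dipoleVertex v (y := (i, k)) hk
      rw [G2_pairing_of_ne hij] at hp
      exact hp ▸ (sameFace_pairing _).symm
  rcases eq_or_ne k 0 with rfl | hk
  · -- the color-0 edge between the two copies of `0` was cut; go round through `bubblePerm c 0`
    have hcol : ∀ i, (G.insertDipole v).sameFace c (G.dipoleVertex v (i, bubblePerm c 0))
        (G.dipoleVertex v (i, 0)) := fun i => sameFace_colPerm _
    exact (hcol i).symm.trans ((hne _ (bubblePerm_zero_ne_zero c) i j).trans (hcol j))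
  · exact hne k hk i j

theorem insertDipole_sameFace_dipoleVertex_edgeRep (i : Fin 2) (k : Fin 4) :
    (G.insertDipole v).sameFace c (G.dipoleVertex v ((0 : Fin 2), edgeRep c (onEdgeOfZero c k)))
      (G.dipoleVertex v (i, k)) :=
  sameFace_edgeRep (H := G.insertDipole v) (G.dipoleVertex v)
    (G.insertDipole_sameFace_dipoleVertex_of_snd_eq v) (fun _ _ => sameFace_colPerm _) i k

theorem insertDipole_sameFace_oldVertex_pairing :
    (G.insertDipole v).sameFace c (G.oldVertex v (G.pairing v)) (G.oldVertex v v) := by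
  have h0 := sameFace_pairing (G := G.insertDipole v) (c := c) (G.oldVertex v v)
  have h1 := sameFace_pairing (G := G.insertDipole v) (c := c) (G.oldVertex v (G.pairing v))
  rw [insertDipole_pairing_oldVertex_self] at h0
  rw [insertDipole_pairing_oldVertex_pairing] at h1
  exact h1.symm.trans ((G.insertDipole_sameFace_dipoleVertex_of_snd_eq v 1 0 0).trans h0)

theorem insertDipole_sameFace_oldVertex {x y : G.V} (h : G.sameFace c x y) :
    (G.insertDipole v).sameFace c (G.oldVertex v x) (G.oldVertex v y) := by
  refine h.map (fun x => ?_)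
    (fun x => sameFace_colPerm (G := G.insertDipole v) (G.oldVertex v x))
  by_cases hv : x = v
  · subst hv
    exact G.insertDipole_sameFace_oldVertex_pairing x
  by_cases hpv : x = G.pairing v
  · subst hpv
    rw [G.invol]
    exact (G.insertDipole_sameFace_oldVertex_pairing v).symm
  · rw [← G.insertDipole_pairing_oldVertex v hv hpv]
    exact sameFace_pairing _

variable (c)

/-- The faces of `G.insertDipole v`: those of `G` (the one through `v` now runs through the
dipole) and one new face inside the dipole. -/
def dipoleFace : (G.insertDipole v).V → G.Faces c ⊕ Unit
  | (Sum.inl u, k) => Sum.inl (G.face c (u, k))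
  | (Sum.inr _, k) => if onEdgeOfZero c k then Sum.inl (G.face c v) else Sum.inr ()

noncomputable def dipoleFaceRep : G.Faces c ⊕ Unit → (G.insertDipole v).V :=
  Sum.elim (fun f => G.oldVertex v f.out)
    (fun _ => G.dipoleVertex v ((0 : Fin 2), edgeRep c false))

theorem dipoleFace_oldVertex (x : G.V) :
    G.dipoleFace v c (G.oldVertex v x) = Sum.inl (G.face c x) := rfl

theorem dipoleFace_dipoleVertex (y : G2.V) :
    G.dipoleFace v c (G.dipoleVertex v y) =
      if onEdgeOfZero c y.2 then Sum.inl (G.face c v) else Sum.inr () := rfl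

theorem dipoleFace_dipoleVertex_zero (i : Fin 2) :
    G.dipoleFace v c (G.dipoleVertex v (i, 0)) = Sum.inl (G.face c v) := by
  rw [dipoleFace_dipoleVertex, onEdgeOfZero_zero, if_pos rfl]

theorem dipoleFace_pairing (z : (G.insertDipole v).V) :
    G.dipoleFace v c ((G.insertDipole v).pairing z) = G.dipoleFace v c z := by
  induction z using insertDipole_induction with
  | old x =>
      by_cases hv : x = v
      · rw [hv, insertDipole_pairing_oldVertex_self, dipoleFace_dipoleVertex_zero,
          dipoleFace_oldVertex]
      by_cases hpv : x = G.pairing v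
      · rw [hpv, insertDipole_pairing_oldVertex_pairing, dipoleFace_dipoleVertex_zero,
          dipoleFace_oldVertex, face_pairing]
      · rw [insertDipole_pairing_oldVertex G v hv hpv, dipoleFace_oldVertex, dipoleFace_oldVertex,
          face_pairing]
  | dipole i k =>
      rcases eq_or_ne k 0 with rfl | hk
      · rw [insertDipole_pairing_dipoleVertex_zero, dipoleFace_oldVertex,
          dipoleFace_dipoleVertex_zero]
        split_ifs
        exacts [rfl, congrArg Sum.inl (face_pairing v)]
      · rw [insertDipole_pairing_dipoleVertex G v hk]
        rfl

theorem dipoleFace_colPerm (z : (G.insertDipole v).V) :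
    G.dipoleFace v c ((G.insertDipole v).colPerm c z) = G.dipoleFace v c z := by
  induction z using insertDipole_induction with
  | old x => exact congrArg Sum.inl (face_eq_face_iff.mpr (sameFace_colPerm x))
  | dipole i k =>
      change G.dipoleFace v c (G.dipoleVertex v (i, bubblePerm c k)) = _
      rw [dipoleFace_dipoleVertex, dipoleFace_dipoleVertex, onEdgeOfZero_bubblePerm]

theorem dipoleFace_dipoleFaceRep (f : G.Faces c ⊕ Unit) :
    G.dipoleFace v c (G.dipoleFaceRep v c f) = f := by
  rcases f with f | _
  · exact congrArg Sum.inl (Quotient.out_eq f)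
  · rw [dipoleFaceRep, Sum.elim_inr, dipoleFace_dipoleVertex, onEdgeOfZero_edgeRep]
    rfl

theorem sameFace_dipoleFaceRep_dipoleFace (z : (G.insertDipole v).V) :
    (G.insertDipole v).sameFace c (G.dipoleFaceRep v c (G.dipoleFace v c z)) z := by
  induction z using insertDipole_induction with
  | old x => exact G.insertDipole_sameFace_oldVertex v (sameFace_out_face x)
  | dipole i k =>
      have hrep := G.insertDipole_sameFace_dipoleVertex_edgeRep v (c := c) i k
      rw [dipoleFace_dipoleVertex]
      cases hk : onEdgeOfZero c k
      · rw [hk] at hrep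
        exact hrep
      · rw [hk] at hrep
        have hv := sameFace_pairing (G := G.insertDipole v) (c := c) (G.oldVertex v v)
        rw [insertDipole_pairing_oldVertex_self] at hv
        exact (G.insertDipole_sameFace_oldVertex v (sameFace_out_face v)).trans
          (hv.symm.trans hrep)

theorem numFaces_insertDipole : (G.insertDipole v).numFaces c = G.numFaces c + 1 := by
  rw [numFaces_eq_card (G.dipoleFace v c) (G.dipoleFace_pairing v c) (G.dipoleFace_colPerm v c)
    (G.dipoleFaceRep v c) (G.dipoleFace_dipoleFaceRep v c)
    (G.sameFace_dipoleFaceRep_dipoleFace v c), Nat.card_sum, Nat.card_unique (α := Unit)]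
  rfl

theorem F_insertDipole : (G.insertDipole v).F = G.F + 3 := by
  simp [F, numFaces_insertDipole, Finset.sum_add_distrib]

end TGraph

theorem IsMelonic.exists_b_F {G : TGraph} (h : IsMelonic G) :
    ∃ n, G.b = 2 * n ∧ G.F = 3 * n + 3 := by
  induction h with
  | base h =>
      obtain ⟨e⟩ := h
      exact ⟨1, e.b_eq, e.F_eq.trans F_G2⟩
  | insert _ v h ih =>
      obtain ⟨e⟩ := h
      obtain ⟨n, hb, hF⟩ := ih
      refine ⟨n + 1, ?_, ?_⟩
      · rw [e.b_eq, b_insertDipole, hb]; ring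
      · rw [e.F_eq, F_insertDipole, hF]; ring

/-- The number of faces of a melonic graph of the rank-3
tetrahedral tensor model with `b` bubbles equals `(3/2) b + 3`; equivalently,
since `b` is even for melonic graphs, `F = 3 (b / 2) + 3`. -/
theorem melonic_face_count (G : TGraph) (h : IsMelonic G) :
    2 ∣ G.b ∧ (G.F : ℚ) = 3 / 2 * G.b + 3 ∧ G.F = 3 * (G.b / 2) + 3 := by
  obtain ⟨n, hb, hF⟩ := h.exists_b_F
  refine ⟨⟨n, hb⟩, ?_, ?_⟩
  · rw [hF, hb]
    push_cast
    ring
  · rw [hF, hb, Nat.mul_div_cancel_left n two_pos]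
end

section
/- Let {e_L, e_R} be two color-0 edges of G not forming a 2-edge-cut, and let c ∈ {1,2,3}. If the two edges lie on two distinct faces of color c (F_c^{{e_L,e_R}}(G) = 2), then both possible flips merge these faces: F_c(G') = F_c(G) − 1. If they lie on a single common face of color c (F_c^{{e_L,e_R}}(G) = 1), then one of the two flips splits this face, giving F_c(G') = F_c(G) + 1, while the other flip leaves F_c unchanged. -/
/-!  A combinatorial model of the Feynman graphs of the rank-3 tetrahedral
(`O(N)^3`) tensor model.

A graph consists of a finite set `B` of bubbles (copies of the tetrahedron
`K_4`); each bubble has four vertices, so the vertex set is `B × Fin 4`.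
Inside every bubble the edges of colors `1,2,3` are given once and for all by
the three fixed-point-free involutions of `Fin 4` (the proper 3-edge-coloring
of `K_4`).  The color-0 propagator edges, one per vertex, are encoded by a
fixed-point-free involution `pairing` of the vertex set. -/

open Equiv

open TGraph

open TGraph

/-! Let `p` be the color-0 pairing and `m` the color-`c` matching. A face of color `c` is an
orbit of `⟨p, m⟩`; it is the union of two distinct cycles of the face permutation `ψ = m * p`,
one for each orientation, so `ψ` has exactly `2 F_c` cycles. The flip `G.flip u w` replaces `ψ`
by `ψ * swap u (p w) * swap (p u) w`, and multiplying a permutation by a transposition merges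
two of its cycles or splits one. If `u` and `w` lie on distinct faces both transpositions merge,
so `F_c` drops by one. If `u` and `p w` lie on one cycle of `ψ` both transpositions split,
so `F_c` grows by one; if `u` and `w` lie on one cycle, the first merges and the second splits.
The other flip `G.flip u (p w)` exchanges the roles of `w` and `p w`. -/

namespace Equiv.Perm

variable {α : Type*}

/-- Fixed points count as cycles of length one. -/
noncomputable def numCycles (σ : Perm α) : ℕ := Nat.card (Quotient (SameCycle.setoid σ))

section Finite

variable [Finite α] {σ : Perm α} {a b x y : α}

theorem SameCycle.mem_of_mapsTo {s : Set α} (hs : Set.MapsTo σ s s) (h : σ.SameCycle x y)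
    (hx : x ∈ s) : y ∈ s := by
  obtain ⟨n, rfl⟩ := h.exists_nat_pow_eq
  rw [coe_pow]
  exact hs.iterate n hx

theorem SameCycle.of_forall_apply {r : α → α → Prop} (hr : Equivalence r)
    (hσ : ∀ z, r z (σ z)) (h : σ.SameCycle x y) : r x y :=
  h.mem_of_mapsTo (s := {z | r x z}) (fun _ hz => hr.trans hz (hσ _)) (hr.refl x)

variable [DecidableEq α]

theorem sameCycle_mul_swap_of_not_sameCycle (hab : ¬σ.SameCycle a b) :
    (σ * swap a b).SameCycle a b := by
  set τ := σ * swap a b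
  by_contra hτ
  let s : Set α := {z | σ.SameCycle b z ∧ τ.SameCycle a z}
  have hs : Set.MapsTo σ s s := by
    rintro z ⟨hbz, haz⟩
    have hza : z ≠ a := by rintro rfl; exact hab hbz.symm
    have hzb : z ≠ b := by rintro rfl; exact hτ haz
    have hτz : τ z = σ z := by simp [τ, swap_apply_of_ne_of_ne hza hzb]
    exact ⟨sameCycle_apply_right.2 hbz, hτz ▸ sameCycle_apply_right.2 haz⟩
  have hτa : τ a = σ b := by simp [τ]
  have hσb : σ b ∈ s :=
    ⟨(SameCycle.refl σ b).apply_right, hτa ▸ (SameCycle.refl τ a).apply_right⟩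
  exact hτ (((SameCycle.refl σ b).apply_left.mem_of_mapsTo hs hσb).2)

theorem sameCycle_mul_swap_iff (hab : ¬σ.SameCycle a b) :
    (σ * swap a b).SameCycle x y ↔ σ.SameCycle x y ∨
      ((σ.SameCycle x a ∨ σ.SameCycle x b) ∧ (σ.SameCycle y a ∨ σ.SameCycle y b)) := by
  set τ := σ * swap a b
  set C : α → Prop := fun z => σ.SameCycle z a ∨ σ.SameCycle z b
  have hC : ∀ {x y}, σ.SameCycle x y → (C x ↔ C y) := fun h =>
    or_congr ⟨h.symm.trans, h.trans⟩ ⟨h.symm.trans, h.trans⟩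
  have hmerge : τ.SameCycle a b := sameCycle_mul_swap_of_not_sameCycle hab
  have hτσ : ∀ {x y}, σ.SameCycle x y → τ.SameCycle x y := by
    refine fun h => h.of_forall_apply (SameCycle.equivalence τ) fun z => ?_
    by_cases hza : z = a
    · subst hza
      simpa [τ] using hmerge.apply_right
    by_cases hzb : z = b
    · subst hzb
      simpa [τ] using hmerge.symm.apply_right
    · exact ⟨1, by simp [τ, swap_apply_of_ne_of_ne hza hzb]⟩
  constructor
  · intro h
    refine h.mem_of_mapsTo (s := {z | σ.SameCycle x z ∨ (C x ∧ C z)}) ?_ (Or.inl (.refl σ x))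
    intro z hz
    have hstep : σ.SameCycle z (τ z) ∨ (C z ∧ C (τ z)) := by
      by_cases hza : z = a
      · subst hza
        refine Or.inr ⟨Or.inl (.refl σ z), Or.inr ?_⟩
        simpa [τ] using (SameCycle.refl σ b).apply_left
      by_cases hzb : z = b
      · subst hzb
        refine Or.inr ⟨Or.inr (.refl σ z), Or.inl ?_⟩
        simpa [τ] using (SameCycle.refl σ a).apply_left
      · exact Or.inl ⟨1, by simp [τ, swap_apply_of_ne_of_ne hza hzb]⟩
    rcases hz with hxz | ⟨hx, hz⟩ <;> rcases hstep with hzτ | ⟨hz', hτ⟩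
    · exact Or.inl (hxz.trans hzτ)
    · exact Or.inr ⟨(hC hxz).2 hz', hτ⟩
    · exact Or.inr ⟨hx, (hC hzτ).1 hz⟩
    · exact Or.inr ⟨hx, hτ⟩
  · have hCa : ∀ {z}, C z → τ.SameCycle z a := by
      rintro z (hz | hz)
      · exact hτσ hz
      · exact (hτσ hz).trans hmerge.symm
    rintro (h | ⟨hx, hy⟩)
    · exact hτσ h
    · exact (hCa hx).trans (hCa hy).symm

theorem not_sameCycle_mul_swap_of_sameCycle (hab : σ.SameCycle a b) (hne : a ≠ b) :
    ¬(σ * swap a b).SameCycle a b := by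
  classical
  have hex : ∃ k, (σ ^ (k + 1)) b = a := by
    obtain ⟨n, hn⟩ := hab.symm.exists_nat_pow_eq
    obtain _ | k := n
    · exact absurd hn.symm (by simpa using hne)
    · exact ⟨k, hn⟩
  set K := Nat.find hex
  -- `σ b, σ² b, …, σ^(K+1) b = a` is the arc of the cycle that `σ * swap a b` closes up.
  have hinner : ∀ j < K, (σ ^ (j + 1)) b ≠ a ∧ (σ ^ (j + 1)) b ≠ b := by
    refine fun j hj => ⟨Nat.find_min hex hj, fun hjb => Nat.find_min hex (m := K - j - 1)
      (by omega) ?_⟩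
    rw [← hjb, ← mul_apply, ← pow_add, show K - j - 1 + 1 + (j + 1) = K + 1 by omega]
    exact Nat.find_spec hex
  let s : Set α := {z | ∃ j ≤ K, (σ ^ (j + 1)) b = z}
  have hs : Set.MapsTo (σ * swap a b) s s := by
    rintro _ ⟨j, hjK, rfl⟩
    rcases hjK.lt_or_eq with hj | rfl
    · refine ⟨j + 1, hj, ?_⟩
      rw [mul_apply, swap_apply_of_ne_of_ne (hinner j hj).1 (hinner j hj).2, pow_succ' σ (j + 1),
        mul_apply]
    · refine ⟨0, Nat.zero_le _, ?_⟩
      rw [mul_apply, Nat.find_spec hex, swap_apply_left, zero_add, pow_one]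
  intro h
  obtain ⟨j, hjK, hjb⟩ := h.mem_of_mapsTo hs ⟨K, le_rfl, Nat.find_spec hex⟩
  rcases hjK.lt_or_eq with hj | rfl
  · exact (hinner j hj).2 hjb
  · exact hne (hjb ▸ Nat.find_spec hex).symm

theorem numCycles_mul_swap_add_one (hab : ¬σ.SameCycle a b) :
    numCycles (σ * swap a b) + 1 = numCycles σ := by
  classical
  let Q := Quotient (SameCycle.setoid σ)
  have hQ : ∀ x y : α, (⟦x⟧ : Q) = ⟦y⟧ ↔ σ.SameCycle x y := fun _ _ => Quotient.eq
  -- `κ z` is the cycle of `z`, with the cycle of `b` renamed to that of `a`.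
  let κ : α → {q : Q // q ≠ ⟦b⟧} := fun z =>
    if hz : σ.SameCycle z b then ⟨⟦a⟧, fun h => hab (Quotient.exact h)⟩
    else ⟨⟦z⟧, fun h => hz (Quotient.exact h)⟩
  have hκ : ∀ x y, κ x = κ y ↔ (σ * swap a b).SameCycle x y := by
    intro x y
    rw [sameCycle_mul_swap_iff hab]
    by_cases hx : σ.SameCycle x b <;> by_cases hy : σ.SameCycle y b <;>
      simp only [κ, hx, hy, dif_pos, dif_neg, not_false_eq_true, Subtype.mk.injEq, hQ]
    all_goals grind [SameCycle.symm, SameCycle.trans]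
  let e : Quotient (SameCycle.setoid (σ * swap a b)) ≃ {q : Q // q ≠ ⟦b⟧} :=
    Equiv.ofBijective (Quotient.lift κ fun x y h => (hκ x y).2 h) ⟨?_, ?_⟩
  · rw [numCycles, numCycles, Nat.card_congr e, ← Finite.card_option,
      Nat.card_congr (optionSubtypeNe _)]
  · rintro ⟨x⟩ ⟨y⟩ h
    exact Quotient.sound ((hκ x y).1 h)
  · rintro ⟨⟨z⟩, hz⟩
    have hzb : ¬σ.SameCycle z b := fun h => hz (Quotient.sound h)
    exact ⟨⟦z⟧, dif_neg hzb⟩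

theorem numCycles_mul_swap_of_sameCycle (hab : σ.SameCycle a b) (hne : a ≠ b) :
    numCycles (σ * swap a b) = numCycles σ + 1 := by
  have := numCycles_mul_swap_add_one (not_sameCycle_mul_swap_of_sameCycle hab hne)
  rwa [mul_assoc, swap_mul_self, mul_one, eq_comm] at this

end Finite

section Involutions

variable {p m : Perm α}

theorem conj_mul_eq_inv (hp : Function.Involutive p) (hm : Function.Involutive m) :
    p * (m * p) * p⁻¹ = (m * p)⁻¹ := by
  ext x
  simp [inv_def, hp.symm_eq_self_of_involutive, hm.symm_eq_self_of_involutive, hp x]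

theorem sameCycle_apply_apply_iff (hp : Function.Involutive p) (hm : Function.Involutive m)
    {x y : α} : (m * p).SameCycle (p x) (p y) ↔ (m * p).SameCycle x y := by
  rw [← sameCycle_inv, ← conj_mul_eq_inv hp hm, sameCycle_conj, inv_def,
    hp.symm_eq_self_of_involutive, hp, hp]

theorem not_sameCycle_apply_self (hp : Function.Involutive p) (hm : Function.Involutive m)
    (hpf : ∀ x, p x ≠ x) (hmf : ∀ x, m x ≠ x) (x : α) : ¬(m * p).SameCycle x (p x) := by
  -- `p` reverses `m * p`, so `((m * p) ^ k) x = p x` gives `p` a fixed point if `k` is even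
  -- and `m` one if `k` is odd.
  rintro ⟨k, hk⟩
  have hreflect : ∀ j : ℤ, p (((m * p) ^ j) x) = ((m * p) ^ (k - j)) x := by
    intro j
    rw [sub_eq_neg_add, zpow_add, mul_apply, hk, zpow_neg, ← inv_zpow, ← conj_mul_eq_inv hp hm,
      conj_zpow, mul_apply, mul_apply, inv_def, symm_apply_apply]
  obtain ⟨j, rfl | rfl⟩ := k.even_or_odd'
  · exact hpf _ (by rw [hreflect, two_mul, add_sub_cancel_right])
  · refine hmf (p (((m * p) ^ j) x)) (Eq.symm ?_)
    conv_lhs => rw [hreflect]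
    rw [show 2 * j + 1 - j = 1 + j by ring, zpow_add, zpow_one, mul_apply, mul_apply]

theorem mem_orbit_closure_pair_iff (hp : Function.Involutive p) (hm : Function.Involutive m)
    {x v : α} : x ∈ MulAction.orbit (Subgroup.closure {p, m}) v ↔
      (m * p).SameCycle x v ∨ (m * p).SameCycle x (p v) := by
  set ψ := m * p
  have hψp : ∀ {x y}, ψ.SameCycle (p x) (p y) ↔ ψ.SameCycle x y :=
    sameCycle_apply_apply_iff hp hm
  let r : α → α → Prop := fun x v => ψ.SameCycle x v ∨ ψ.SameCycle x (p v)
  have hr : Equivalence r := by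
    refine ⟨fun x => Or.inl (.refl ψ x), ?_, ?_⟩
    · rintro x y (h | h)
      · exact Or.inl h.symm
      · exact Or.inr (by simpa only [hp y] using (hψp.2 h).symm)
    · rintro x y z (hxy | hxy) (hyz | hyz)
      · exact Or.inl (hxy.trans hyz)
      · exact Or.inr (hxy.trans hyz)
      · exact Or.inr (hxy.trans (hψp.2 hyz))
      · exact Or.inl (hxy.trans (by simpa only [hp z] using hψp.2 hyz))
  constructor
  · rintro ⟨⟨g, hg⟩, rfl⟩
    induction hg using Subgroup.closure_induction generalizing v with
    | mem g hg =>
      rcases hg with rfl | rfl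
      · exact Or.inr (.refl ψ _)
      · exact Or.inr (by simpa [ψ, hp v] using (SameCycle.refl ψ (p v)).apply_left)
    | one => exact hr.refl v
    | mul g h _ _ hg hh => exact hr.trans (hg (v := h v)) hh
    | inv g _ hg => simpa using hr.symm (hg (v := g⁻¹ v))
  · have hψ : ψ ∈ Subgroup.closure {p, m} :=
      mul_mem (Subgroup.subset_closure (by simp)) (Subgroup.subset_closure (by simp))
    have hpH : p ∈ Subgroup.closure {p, m} := Subgroup.subset_closure (by simp)
    rintro (⟨i, hi⟩ | ⟨i, hi⟩)
    · refine ⟨⟨ψ ^ (-i), zpow_mem hψ _⟩, ?_⟩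
      change (ψ ^ (-i)) v = x
      rw [← hi, ← mul_apply, ← zpow_add, neg_add_cancel, zpow_zero, one_apply]
    · refine ⟨⟨ψ ^ (-i) * p, mul_mem (zpow_mem hψ _) hpH⟩, ?_⟩
      change (ψ ^ (-i)) (p v) = x
      rw [← hi, ← mul_apply, ← zpow_add, neg_add_cancel, zpow_zero, one_apply]

theorem numCycles_mul_eq_two_mul [Finite α] (hp : Function.Involutive p)
    (hm : Function.Involutive m) (hpf : ∀ x, p x ≠ x) (hmf : ∀ x, m x ≠ x) :
    numCycles (m * p) =
      2 * Nat.card (MulAction.orbitRel.Quotient (Subgroup.closure {p, m}) α) := by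
  set H := Subgroup.closure {p, m}
  have horbit : ∀ {x v}, MulAction.orbitRel H α x v ↔
      (m * p).SameCycle x v ∨ (m * p).SameCycle x (p v) := by
    intro x v
    rw [MulAction.orbitRel_apply, mem_orbit_closure_pair_iff hp hm]
  let f : Quotient (SameCycle.setoid (m * p)) → MulAction.orbitRel.Quotient H α :=
    Quotient.map' id fun _ _ h => horbit.2 (Or.inl h)
  have hfiber : ∀ F, Nat.card {q // f q = F} = 2 := by
    rintro ⟨v⟩
    rw [Nat.card_eq_two_iff]
    have hpv : f ⟦p v⟧ = ⟦v⟧ := Quotient.sound (horbit.2 (Or.inr (.refl _ _)))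
    refine ⟨⟨⟦v⟧, rfl⟩, ⟨⟦p v⟧, hpv⟩, ?_, ?_⟩
    · intro h
      exact not_sameCycle_apply_self hp hm hpf hmf v (Quotient.exact (congrArg Subtype.val h))
    · ext ⟨⟨z⟩, hz⟩
      simp only [Set.mem_insert_iff, Set.mem_singleton_iff, Set.mem_univ, iff_true]
      rcases horbit.1 (Quotient.exact hz) with h | h
      · exact Or.inl (Subtype.ext (Quotient.sound h))
      · exact Or.inr (Subtype.ext (Quotient.sound h))
  have := Fintype.ofFinite (MulAction.orbitRel.Quotient H α)
  rw [numCycles, ← Nat.card_congr (Equiv.sigmaFiberEquiv f), Nat.card_sigma]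
  simp [hfiber, Nat.card_eq_fintype_card, mul_comm]

end Involutions

/-! The hypotheses `hψp` and `hsep` on `p` are those that the pairing `p` satisfies for the face
permutation `ψ = m * p` of two fixed-point-free involutions. -/
section Regluing

variable [Finite α] [DecidableEq α] {ψ p : Perm α} {u w : α}

theorem numCycles_mul_swap_mul_swap_add_two (hp : Function.Involutive p)
    (hψp : ∀ {x y}, ψ.SameCycle (p x) (p y) ↔ ψ.SameCycle x y)
    (hsep : ∀ x, ¬ψ.SameCycle x (p x)) (huw : ¬ψ.SameCycle u w)
    (hub : ¬ψ.SameCycle u (p w)) :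
    numCycles (ψ * swap u (p w) * swap (p u) w) + 2 = numCycles ψ := by
  have hmerge₁ := numCycles_mul_swap_add_one hub
  have hsep₂ : ¬(ψ * swap u (p w)).SameCycle (p u) w := by
    rw [sameCycle_mul_swap_iff hub]
    rintro (h | ⟨h | h, -⟩)
    · exact hub (hψp.1 (by rwa [hp w]))
    · exact hsep u h.symm
    · exact huw (hψp.1 h)
  have hmerge₂ := numCycles_mul_swap_add_one hsep₂
  omega

theorem numCycles_mul_swap_mul_swap_eq_add_two (hp : Function.Involutive p)
    (hψp : ∀ {x y}, ψ.SameCycle (p x) (p y) ↔ ψ.SameCycle x y)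
    (hsep : ∀ x, ¬ψ.SameCycle x (p x)) (hw : w ≠ p u) (hub : ψ.SameCycle u (p w)) :
    numCycles (ψ * swap u (p w) * swap (p u) w) = numCycles ψ + 2 := by
  have hub' : u ≠ p w := by
    rintro rfl
    exact hw (hp w).symm
  have hsplit₁ := numCycles_mul_swap_of_sameCycle hub hub'
  set τ := ψ * swap u (p w)
  have hψ : ∀ {x y}, ψ.SameCycle x y ↔ τ.SameCycle x y ∨
      ((τ.SameCycle x u ∨ τ.SameCycle x (p w)) ∧
        (τ.SameCycle y u ∨ τ.SameCycle y (p w))) := by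
    intro x y
    rw [← sameCycle_mul_swap_iff (not_sameCycle_mul_swap_of_sameCycle hub hub'),
      mul_swap_mul_self]
  have hτψ : ∀ {x y}, τ.SameCycle x y → ψ.SameCycle x y := fun h => hψ.2 (Or.inl h)
  have haw : ψ.SameCycle (p u) w := by simpa only [hp w] using hψp.2 hub
  have hsame₂ : τ.SameCycle (p u) w := by
    rcases hψ.1 haw with h | ⟨h | h, -⟩
    · exact h
    · exact absurd (hτψ h).symm (hsep u)
    · exact absurd ((hψp.1 (hτψ h)).symm.trans hub) (hsep w)
  have hsplit₂ := numCycles_mul_swap_of_sameCycle hsame₂ hw.symm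
  omega

theorem numCycles_mul_swap_mul_swap_eq
    (hψp : ∀ {x y}, ψ.SameCycle (p x) (p y) ↔ ψ.SameCycle x y)
    (hsep : ∀ x, ¬ψ.SameCycle x (p x)) (huw : ψ.SameCycle u w) :
    numCycles (ψ * swap u (p w) * swap (p u) w) = numCycles ψ := by
  have hub : ¬ψ.SameCycle u (p w) := fun h => hsep w (huw.symm.trans h)
  have hmerge₁ := numCycles_mul_swap_add_one hub
  have hsame₂ : (ψ * swap u (p w)).SameCycle (p u) w :=
    (sameCycle_mul_swap_iff hub).2 (Or.inr ⟨Or.inr (hψp.2 huw), Or.inl huw.symm⟩)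
  have hne : p u ≠ w := by
    rintro rfl
    exact hsep u huw
  have hsplit₂ := numCycles_mul_swap_of_sameCycle hsame₂ hne
  omega

end Regluing

end Equiv.Perm

namespace TGraph

theorem bubblePerm_involutive (c : Fin 3) : Function.Involutive (bubblePerm c) := by
  unfold Function.Involutive
  fin_cases c <;> decide

theorem bubblePerm_apply_ne (c : Fin 3) (k : Fin 4) : bubblePerm c k ≠ k := by
  fin_cases c <;> fin_cases k <;> decide

variable (G : TGraph) (c : Fin 3)

theorem colPerm_involutive : Function.Involutive (G.colPerm c) := fun v =>
  Prod.ext rfl (bubblePerm_involutive c v.2)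

theorem colPerm_apply_ne (v : G.V) : G.colPerm c v ≠ v := fun h =>
  bubblePerm_apply_ne c v.2 (congrArg Prod.snd h)

theorem sameCycle_pairing_pairing_iff {x y : G.V} :
    (G.colPerm c * G.pairing).SameCycle (G.pairing x) (G.pairing y) ↔
      (G.colPerm c * G.pairing).SameCycle x y :=
  Perm.sameCycle_apply_apply_iff G.invol (G.colPerm_involutive c)

theorem not_sameCycle_pairing (x : G.V) :
    ¬(G.colPerm c * G.pairing).SameCycle x (G.pairing x) :=
  Perm.not_sameCycle_apply_self G.invol (G.colPerm_involutive c) G.fixfree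
    (G.colPerm_apply_ne c) x

theorem sameFace_iff {u w : G.V} : G.sameFace c u w ↔
    (G.colPerm c * G.pairing).SameCycle u w ∨
      (G.colPerm c * G.pairing).SameCycle u (G.pairing w) :=
  Perm.mem_orbit_closure_pair_iff G.invol (G.colPerm_involutive c)

theorem numCycles_colPerm_mul_pairing :
    Perm.numCycles (G.colPerm c * G.pairing) = 2 * G.numFaces c :=
  Perm.numCycles_mul_eq_two_mul G.invol (G.colPerm_involutive c) G.fixfree
    (G.colPerm_apply_ne c)

theorem colPerm_mul_pairing_flip (u w : G.V) :
    (G.flip u w).colPerm c * (G.flip u w).pairing =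
      G.colPerm c * G.pairing * swap u (G.pairing w) * swap (G.pairing u) w := by
  have h : swap (G.pairing u) w * G.pairing = G.pairing * swap u (G.pairing w) := by
    conv_lhs => rw [← G.invol w, swap_apply_apply, inv_mul_cancel_right]
  change G.colPerm c * (swap (G.pairing u) w * G.pairing * swap (G.pairing u) w) = _
  rw [h]
  simp only [mul_assoc]

theorem two_mul_numFaces_flip (u w : G.V) :
    2 * (G.flip u w).numFaces c = Perm.numCycles
      (G.colPerm c * G.pairing * swap u (G.pairing w) * swap (G.pairing u) w) := by
  rw [← numCycles_colPerm_mul_pairing, colPerm_mul_pairing_flip]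
  rfl

end TGraph

open Equiv.Perm

theorem flip_face_variation_general (G : TGraph) (u w : G.V)
    (hw1 : w ≠ u) (hw2 : w ≠ G.pairing u) (c : Fin 3) :
    (¬ G.sameFace c u w →
      ((G.flip u w).numFaces c : ℤ) = (G.numFaces c : ℤ) - 1 ∧
        ((G.flip u (G.pairing w)).numFaces c : ℤ) = (G.numFaces c : ℤ) - 1) ∧
    (G.sameFace c u w →
      ((G.flip u w).numFaces c = G.numFaces c + 1 ∧
        (G.flip u (G.pairing w)).numFaces c = G.numFaces c) ∨
      ((G.flip u w).numFaces c = G.numFaces c ∧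
        (G.flip u (G.pairing w)).numFaces c = G.numFaces c + 1)) := by
  have hψp := @G.sameCycle_pairing_pairing_iff c
  have hsep := G.not_sameCycle_pairing c
  have hG := G.numCycles_colPerm_mul_pairing c
  have h₁ := G.two_mul_numFaces_flip c u w
  have h₂ := G.two_mul_numFaces_flip c u (G.pairing w)
  have hpw : G.pairing (G.pairing w) = w := G.invol w
  rw [sameFace_iff]
  refine ⟨fun h => ?_, fun h => ?_⟩
  · obtain ⟨huw, hup⟩ := not_or.1 h
    have e₁ := numCycles_mul_swap_mul_swap_add_two G.invol hψp hsep huw hup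
    have e₂ := numCycles_mul_swap_mul_swap_add_two G.invol hψp hsep hup (by rwa [hpw])
    omega
  · rcases h with huw | hup
    · have e₁ := numCycles_mul_swap_mul_swap_eq hψp hsep huw
      have e₂ := numCycles_mul_swap_mul_swap_eq_add_two G.invol hψp hsep
        (G.pairing.injective.ne hw1) (by rwa [hpw])
      omega
    · have e₁ := numCycles_mul_swap_mul_swap_eq_add_two G.invol hψp hsep hw2 hup
      have e₂ := numCycles_mul_swap_mul_swap_eq hψp hsep hup
      omega

/-- If the two (distinct) color-0 edges `{u, pairing u}`,
`{w, pairing w}` do not form a 2-edge-cut then: if they lie on two distinct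
faces of color `c` (`F_c^{{e_L,e_R}} = 2`), both flips merge these two faces,
decreasing `F_c` by one; if they lie on a single common face of color `c`
(`F_c^{{e_L,e_R}} = 1`), one of the two flips splits this face, increasing
`F_c` by one, while the other flip leaves `F_c` unchanged. -/
theorem flip_face_variation (G : TGraph) (u w : G.V)
    (hw1 : w ≠ u) (hw2 : w ≠ G.pairing u)
    (hcut : ¬ G.CutDisconnects u w) (c : Fin 3) :
    (¬ G.sameFace c u w →
      ((G.flip u w).numFaces c : ℤ) = (G.numFaces c : ℤ) - 1 ∧
        ((G.flip u (G.pairing w)).numFaces c : ℤ) = (G.numFaces c : ℤ) - 1) ∧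
    (G.sameFace c u w →
      ((G.flip u w).numFaces c = G.numFaces c + 1 ∧
        (G.flip u (G.pairing w)).numFaces c = G.numFaces c) ∨
      ((G.flip u w).numFaces c = G.numFaces c ∧
        (G.flip u (G.pairing w)).numFaces c = G.numFaces c + 1)) :=
  flip_face_variation_general G u w hw1 hw2 c
end
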